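/- Suppose μ_m ≠ 0 and the input layer is replaced by its Sparsity Normalized version h^0_{SN,k} = h̃^0_k · m_k · K_1 / μ_m for a fixed real constant K_1. Then for every output coordinate l, the output h^L_l is integrable and E[h^L_l] = (f_L ∘ f_{L-1} ∘ ⋯ ∘ f_1)(μ_x · K_1), where f_i(x) = σ(n_{i-1} μ_w^i x + μ_b^i). In particular, the expected output no longer depends on the mask mean μ_m (Theorem 4: Sparsity Normalization removes the variable sparsity problem for affine activations). -/

import Mathlib

/-!
The expected output is computed layer by layer. A neuron of layer `i + 1` is
`σ (∑ₖ W i j k · h i k + b i j)`, and each weight `W i j k` is independent of `h i k`, because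
`h i k` is a function of the inputs and of the parameters of layers `< i` only. Hence
`E[W i j k · h i k] = μw i · E[h i k]`, and since `σ` is affine, `E` commutes with `σ`, giving
`E[h (i+1) j] = f_{i+1} (E[h i k])`. At the input, independence of feature and mask gives
`E[h̃ₖ mₖ K₁ / μm] = μx μm K₁ / μm = μx K₁`, so the factor `μm` cancels.
-/

open MeasureTheory ProbabilityTheory

/-- The composition `f_L ∘ ⋯ ∘ f_1` of the per-layer affine maps
`f_{i+1}(x) = σ (n i · μw i · x + μb i)` (0-based layer indexing):
`layerComp σ n μw μb L x = (f_L ∘ ⋯ ∘ f_1) x`. -/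
def layerComp (σ : ℝ → ℝ) (n : ℕ → ℕ) (μw μb : ℕ → ℝ) : ℕ → ℝ → ℝ
  | 0, x => x
  | i + 1, x => σ ((n i : ℝ) * μw i * layerComp σ n μw μb i x + μb i)

lemma Finset.aestronglyMeasurable_fun_sum' {Ω ι M : Type*} [AddCommMonoid M] [TopologicalSpace M]
    [ContinuousAdd M] {m m₀ : MeasurableSpace Ω} {μ : Measure[m₀] Ω} (s : Finset ι) {f : ι → Ω → M}
    (hf : ∀ i ∈ s, AEStronglyMeasurable[m] (f i) μ) :
    AEStronglyMeasurable[m] (fun ω ↦ ∑ i ∈ s, f i ω) μ := by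
  induction s using Finset.cons_induction with
  | empty => simpa using @aestronglyMeasurable_const _ _ _ m _ μ (0 : M)
  | cons k s hk ih =>
    simp only [Finset.sum_cons]
    exact (hf k (Finset.mem_cons_self k s)).fun_add
      (ih fun i hi ↦ hf i (Finset.mem_cons_of_mem hi))

section GeneratedSigmaAlgebra

variable {Ω ι : Type*} [MeasurableSpace Ω] {μ : Measure Ω} {F : ι → Ω → ℝ}

/-- The σ-algebra generated by measurable versions of the `F y`, `y ∈ S`: the `F y` themselves
need not be measurable, and independence of σ-algebras only splits along measurable ones. -/
noncomputable abbrev aeGenerated (hF : ∀ x, AEMeasurable (F x) μ) (S : Set ι) :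
    MeasurableSpace Ω :=
  ⨆ y ∈ S, MeasurableSpace.comap ((hF y).mk (F y)) inferInstance

variable (hF : ∀ x, AEMeasurable (F x) μ)

lemma aeGenerated_mono {S T : Set ι} (hST : S ⊆ T) : aeGenerated hF S ≤ aeGenerated hF T :=
  biSup_mono hST

lemma aestronglyMeasurable_aeGenerated {S : Set ι} {y : ι} (hy : y ∈ S) :
    AEStronglyMeasurable[aeGenerated hF S] (F y) μ :=
  ⟨(hF y).mk (F y),
    (Measurable.of_comap_le
      (le_biSup (fun y ↦ MeasurableSpace.comap ((hF y).mk (F y)) _) hy)).stronglyMeasurable,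
    (hF y).ae_eq_mk⟩

lemma ProbabilityTheory.iIndepFun.indepFun_of_aestronglyMeasurable_aeGenerated
    (hindep : iIndepFun F μ) {S : Set ι} {x : ι} (hx : x ∉ S) {g : Ω → ℝ}
    (hg : AEStronglyMeasurable[aeGenerated hF S] g μ) : IndepFun (F x) g μ := by
  have hindep_mk : iIndep (fun y ↦ MeasurableSpace.comap ((hF y).mk (F y)) inferInstance) μ :=
    (iIndepFun_congr fun y ↦ (hF y).ae_eq_mk).1 hindep
  have h := indep_iSup_of_disjoint (fun y ↦ (hF y).measurable_mk.comap_le) hindep_mk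
    (Set.disjoint_singleton_left.2 hx)
  rw [iSup_singleton] at h
  have h_mk : IndepFun ((hF x).mk (F x)) (hg.mk g) μ :=
    indep_of_indep_of_le_right h hg.stronglyMeasurable_mk.measurable.comap_le
  exact h_mk.congr (hF x).ae_eq_mk.symm hg.ae_eq_mk.symm

end GeneratedSigmaAlgebra

section Moments

variable {Ω : Type*} [MeasurableSpace Ω] {μ : Measure Ω}

lemma integrable_and_integral_sparsity_normalized {X M : Ω → ℝ} {x m K : ℝ} (hm : m ≠ 0)
    (hX : Integrable X μ) (hM : Integrable M μ) (hXM : IndepFun X M μ)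
    (hXmean : ∫ ω, X ω ∂μ = x) (hMmean : ∫ ω, M ω ∂μ = m) :
    Integrable (fun ω ↦ X ω * M ω * K / m) μ ∧ ∫ ω, X ω * M ω * K / m ∂μ = x * K := by
  refine ⟨((hXM.integrable_mul hX hM).mul_const K).div_const m, ?_⟩
  rw [integral_div, integral_mul_const,
    hXM.integral_fun_mul_eq_mul_integral hX.aestronglyMeasurable hM.aestronglyMeasurable,
    hXmean, hMmean]
  field_simp

lemma integrable_and_integral_affine_neuron [IsProbabilityMeasure μ] {ι : Type*} [Fintype ι]
    {σ : ℝ → ℝ} {a c : ℝ} (hσ : ∀ x, σ x = a * x + c)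
    {W X : ι → Ω → ℝ} {B : Ω → ℝ} {w v β : ℝ}
    (hW : ∀ k, Integrable (W k) μ) (hX : ∀ k, Integrable (X k) μ) (hB : Integrable B μ)
    (hWX : ∀ k, IndepFun (W k) (X k) μ) (hWmean : ∀ k, ∫ ω, W k ω ∂μ = w)
    (hXmean : ∀ k, ∫ ω, X k ω ∂μ = v) (hBmean : ∫ ω, B ω ∂μ = β) :
    Integrable (fun ω ↦ σ (∑ k, W k ω * X k ω + B ω)) μ ∧
      ∫ ω, σ (∑ k, W k ω * X k ω + B ω) ∂μ = σ (Fintype.card ι * w * v + β) := by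
  have hWXint k : Integrable (fun ω ↦ W k ω * X k ω) μ := (hWX k).integrable_mul (hW k) (hX k)
  have hsum : Integrable (fun ω ↦ ∑ k, W k ω * X k ω) μ :=
    integrable_finsetSum _ fun k _ ↦ hWXint k
  have hpre : Integrable (fun ω ↦ a * (∑ k, W k ω * X k ω + B ω)) μ :=
    (hsum.add hB).const_mul a
  simp only [hσ]
  refine ⟨hpre.add (integrable_const c), ?_⟩
  rw [integral_add hpre (integrable_const c), integral_const_mul, integral_add hsum hB,
    integral_finsetSum _ fun k _ ↦ hWXint k]
  simp [fun k ↦ (hWX k).integral_fun_mul_eq_mul_integral (hW k).aestronglyMeasurable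
    (hX k).aestronglyMeasurable, hWmean, hXmean, hBmean, mul_assoc]

end Moments

abbrev NetIndex (L : ℕ) (n : ℕ → ℕ) : Type :=
  ((Σ i : Fin L, Fin (n ((i : ℕ) + 1)) × Fin (n (i : ℕ))) ⊕
    (Σ i : Fin L, Fin (n ((i : ℕ) + 1)))) ⊕ (Fin (n 0) ⊕ Fin (n 0))

/-- The layer at which a parameter enters the network: weights and biases of layer `i` (0-based)
have depth `i + 1`, features and masks depth `0`, so `h i` only involves depths `≤ i`. -/
def NetIndex.depth {L : ℕ} {n : ℕ → ℕ} : NetIndex L n → ℕ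
  | .inl (.inl p) => p.1 + 1
  | .inl (.inr p) => p.1 + 1
  | .inr _ => 0

def netParams {Ω : Type*} (L : ℕ) {n : ℕ → ℕ}
    (W : (i : ℕ) → Fin (n (i + 1)) → Fin (n i) → Ω → ℝ) (b : (i : ℕ) → Fin (n (i + 1)) → Ω → ℝ)
    (ht m : Fin (n 0) → Ω → ℝ) : NetIndex L n → Ω → ℝ :=
  Sum.elim (Sum.elim (fun p ↦ W p.1 p.2.1 p.2.2) (fun p ↦ b p.1 p.2)) (Sum.elim ht m)

lemma aestronglyMeasurable_layer {Ω : Type*} [MeasurableSpace Ω] {μ : Measure Ω}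
    {L : ℕ} {n : ℕ → ℕ} {σ : ℝ → ℝ} (hσ : Continuous σ)
    {W : (i : ℕ) → Fin (n (i + 1)) → Fin (n i) → Ω → ℝ} {b : (i : ℕ) → Fin (n (i + 1)) → Ω → ℝ}
    {ht m : Fin (n 0) → Ω → ℝ} (hF : ∀ x, AEMeasurable (netParams L W b ht m x) μ)
    {h : (i : ℕ) → Fin (n i) → Ω → ℝ} {K₁ μm : ℝ}
    (h0SN : ∀ k ω, h 0 k ω = ht k ω * m k ω * K₁ / μm)
    (hrec : ∀ i < L, ∀ j ω, h (i + 1) j ω = σ (∑ k, W i j k ω * h i k ω + b i j ω)) :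
    ∀ i ≤ L, ∀ k, AEStronglyMeasurable[aeGenerated hF {x | x.depth ≤ i}] (h i k) μ := by
  have hmem i x (hx : NetIndex.depth x ≤ i) :
      AEStronglyMeasurable[aeGenerated hF {x | x.depth ≤ i}] (netParams L W b ht m x) μ :=
    aestronglyMeasurable_aeGenerated hF hx
  intro i
  induction i with
  | zero =>
    intro _ k
    simp only [funext (h0SN k), div_eq_mul_inv]
    exact (((hmem 0 (.inr (.inl k)) le_rfl).mul (hmem 0 (.inr (.inr k)) le_rfl)).mul_const
      K₁).mul_const μm⁻¹
  | succ i ih =>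
    intro (hi : i < L) j
    rw [funext (hrec i hi j)]
    have hle := aeGenerated_mono hF fun x (hx : x.depth ≤ i) ↦ Nat.le_succ_of_le hx
    refine hσ.comp_aestronglyMeasurable
      ((Finset.aestronglyMeasurable_fun_sum' _ fun k _ ↦ ?_).fun_add ?_)
    · exact (hmem (i + 1) (.inl (.inl ⟨⟨i, hi⟩, j, k⟩)) le_rfl).fun_mul ((ih hi.le k).mono hle)
    · exact hmem (i + 1) (.inl (.inr ⟨⟨i, hi⟩, j⟩)) le_rfl

theorem sparsity_normalization_removes_vsp_general
    {Ω : Type*} [MeasureSpace Ω] [IsProbabilityMeasure (ℙ : Measure Ω)]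
    (L : ℕ) (n : ℕ → ℕ)
    (σ : ℝ → ℝ) (a c : ℝ) (hσ : ∀ x, σ x = a * x + c)
    (W : (i : ℕ) → Fin (n (i + 1)) → Fin (n i) → Ω → ℝ)
    (b : (i : ℕ) → Fin (n (i + 1)) → Ω → ℝ)
    (ht m : Fin (n 0) → Ω → ℝ)
    (μw μb : ℕ → ℝ) (μx μm K₁ : ℝ) (hμm : μm ≠ 0)
    (hWint : ∀ i < L, ∀ (j : Fin (n (i + 1))) (k : Fin (n i)), Integrable (W i j k))
    (hWmean : ∀ i < L, ∀ (j : Fin (n (i + 1))) (k : Fin (n i)), ∫ ω, W i j k ω = μw i)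
    (hbint : ∀ i < L, ∀ (j : Fin (n (i + 1))), Integrable (b i j))
    (hbmean : ∀ i < L, ∀ (j : Fin (n (i + 1))), ∫ ω, b i j ω = μb i)
    (hhint : ∀ k, Integrable (ht k)) (hhmean : ∀ k, ∫ ω, ht k ω = μx)
    (hmint : ∀ k, Integrable (m k)) (hmmean : ∀ k, ∫ ω, m k ω = μm)
    (hindep : iIndepFun
      (Sum.elim
        (Sum.elim
          (fun p : Σ i : Fin L, Fin (n ((i : ℕ) + 1)) × Fin (n (i : ℕ)) =>
            W p.1 p.2.1 p.2.2)
          (fun p : Σ i : Fin L, Fin (n ((i : ℕ) + 1)) => b p.1 p.2))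
        (Sum.elim ht m)) ℙ)
    (h : (i : ℕ) → Fin (n i) → Ω → ℝ)
    (h0SN : ∀ (k : Fin (n 0)) (ω : Ω), h 0 k ω = ht k ω * m k ω * K₁ / μm)
    (hrec : ∀ i < L, ∀ (j : Fin (n (i + 1))) (ω : Ω),
      h (i + 1) j ω = σ (∑ k, W i j k ω * h i k ω + b i j ω)) :
    ∀ l : Fin (n L), Integrable (h L l) ∧
      ∫ ω, h L l ω = layerComp σ n μw μb L (μx * K₁) := by
  have hparams : iIndepFun (netParams L W b ht m) ℙ := hindep
  have hF : ∀ x, AEMeasurable (netParams L W b ht m x) := by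
    rintro (⟨⟨i, j, k⟩ | ⟨i, j⟩⟩ | (k | k))
    exacts [(hWint i i.isLt j k).aemeasurable, (hbint i i.isLt j).aemeasurable,
      (hhint k).aemeasurable, (hmint k).aemeasurable]
  have hσcont : Continuous σ := by rw [funext hσ]; fun_prop
  have hmeas := aestronglyMeasurable_layer hσcont hF h0SN hrec
  suffices ∀ i ≤ L, ∀ k, Integrable (h i k) ∧
      ∫ ω, h i k ω = layerComp σ n μw μb i (μx * K₁) from fun l ↦ this L le_rfl l
  intro i
  induction i with
  | zero =>
    intro _ k
    rw [funext (h0SN k)]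
    exact integrable_and_integral_sparsity_normalized hμm (hhint k) (hmint k)
      (hparams.indepFun (i := .inr (.inl k)) (j := .inr (.inr k)) (by simp)) (hhmean k) (hmmean k)
  | succ i ih =>
    intro (hi : i < L) j
    rw [funext (hrec i hi j)]
    have hWh k : IndepFun (W i j k) (h i k) :=
      hparams.indepFun_of_aestronglyMeasurable_aeGenerated hF (x := .inl (.inl ⟨⟨i, hi⟩, j, k⟩))
        (Nat.not_succ_le_self i) (hmeas i hi.le k)
    obtain ⟨hint, hmean⟩ := integrable_and_integral_affine_neuron hσ (hWint i hi j)
      (fun k ↦ (ih hi.le k).1) (hbint i hi j) hWh (hWmean i hi j) (fun k ↦ (ih hi.le k).2)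
      (hbmean i hi j)
    rw [Fintype.card_fin] at hmean
    exact ⟨hint, hmean⟩

/-- **Theorem 4 (Sparsity Normalization removes the VSP for affine activations).**
An `L`-layer network with affine activation `σ x = a x + c` is applied to the
Sparsity Normalized input `h⁰_{SN,k} = h̃⁰ₖ · mₖ · K₁ / μm` (with `μm ≠ 0`).
Layer `i` (for `0 ≤ i < L`) has weight matrix `W i` with integrable mean-`μw i`
entries and bias `b i` with integrable mean-`μb i` coordinates; features have
mean `μx`, masks mean `μm`, and all weights, biases, features and masks are
mutually independent.  Then every output coordinate `h L l` is integrable and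
`E[h L l] = (f_L ∘ ⋯ ∘ f_1)(μx · K₁)` where `f_{i+1}(x) = σ (n i · μw i · x + μb i)`;
in particular the expected output does not depend on the mask mean `μm`. -/
theorem sparsity_normalization_removes_vsp
    {Ω : Type*} [MeasureSpace Ω] [IsProbabilityMeasure (ℙ : Measure Ω)]
    (L : ℕ) (hL : 1 ≤ L) (n : ℕ → ℕ) (hn : ∀ i ≤ L, 1 ≤ n i)
    (σ : ℝ → ℝ) (a c : ℝ) (hσ : ∀ x, σ x = a * x + c)
    (W : (i : ℕ) → Fin (n (i + 1)) → Fin (n i) → Ω → ℝ)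
    (b : (i : ℕ) → Fin (n (i + 1)) → Ω → ℝ)
    (ht m : Fin (n 0) → Ω → ℝ)
    (μw μb : ℕ → ℝ) (μx μm K₁ : ℝ) (hμm : μm ≠ 0)
    (hWint : ∀ i < L, ∀ (j : Fin (n (i + 1))) (k : Fin (n i)), Integrable (W i j k))
    (hWmean : ∀ i < L, ∀ (j : Fin (n (i + 1))) (k : Fin (n i)), ∫ ω, W i j k ω = μw i)
    (hbint : ∀ i < L, ∀ (j : Fin (n (i + 1))), Integrable (b i j))
    (hbmean : ∀ i < L, ∀ (j : Fin (n (i + 1))), ∫ ω, b i j ω = μb i)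
    (hhint : ∀ k, Integrable (ht k)) (hhmean : ∀ k, ∫ ω, ht k ω = μx)
    (hmint : ∀ k, Integrable (m k)) (hmmean : ∀ k, ∫ ω, m k ω = μm)
    (hindep : iIndepFun
      (Sum.elim
        (Sum.elim
          (fun p : Σ i : Fin L, Fin (n ((i : ℕ) + 1)) × Fin (n (i : ℕ)) =>
            W p.1 p.2.1 p.2.2)
          (fun p : Σ i : Fin L, Fin (n ((i : ℕ) + 1)) => b p.1 p.2))
        (Sum.elim ht m)) ℙ)
    (h : (i : ℕ) → Fin (n i) → Ω → ℝ)
    (h0SN : ∀ (k : Fin (n 0)) (ω : Ω), h 0 k ω = ht k ω * m k ω * K₁ / μm)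
    (hrec : ∀ i < L, ∀ (j : Fin (n (i + 1))) (ω : Ω),
      h (i + 1) j ω = σ (∑ k, W i j k ω * h i k ω + b i j ω)) :
    ∀ l : Fin (n L), Integrable (h L l) ∧
      ∫ ω, h L l ω = layerComp σ n μw μb L (μx * K₁) :=
  sparsity_normalization_removes_vsp_general L n σ a c hσ W b ht m μw μb μx μm K₁ hμm hWint hWmean
    hbint hbmean hhint hhmean hmint hmmean hindep h h0SN hrec
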